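/- Core membership of the fixed-point payoffs: let x be a fixed point of the tree bargaining equations and define u_t = (1 − x_t)·w_t for every node t (so u_r = w_r). Then the total payoff equals the grand coalition value, ∑_{t ∈ T} u_t = v* = V(T), and for every coalition S of nodes, ∑_{t ∈ S} u_t ≥ V(S); in other words, the payoff vector u belongs to the core of the cooperative game (T, V). -/

import Mathlib

/-- A finite rooted tree, given by a parent function: the root is its own
parent, and every node reaches the root by iterating `parent`. -/
structure BTree where
  V : Type
  [instFintype : Fintype V]
  [instDecEq : DecidableEq V]
  root : V
  parent : V → V
  parent_root : parent root = root
  reaches_root : ∀ t : V, ∃ k : ℕ, parent^[k] t = root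

attribute [instance] BTree.instFintype BTree.instDecEq

/-- The children of a node `s`: the non-root nodes whose parent is `s`. -/
def BTree.children (T : BTree) (s : T.V) : Finset T.V :=
  Finset.univ.filter fun t => t ≠ T.root ∧ T.parent t = s

/-- A leaf is a node with no children. -/
def BTree.IsLeaf (T : BTree) (l : T.V) : Prop :=
  T.children l = ∅

/-- Maximum of `f` over a finite set `F`, with value `0` when `F` is empty. -/
noncomputable def fmax {α : Type*} (F : Finset α) (f : α → ℝ) : ℝ :=
  sSup (insert 0 (f '' (F : Set α)))

/-- `w` is the value function determined by leaf values `v` and shares `x`: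
`w l = v l` at each leaf `l`, and `w s = max_{t ∈ children s} x t · w t` at
each internal node `s`. -/
def IsValueFn (T : BTree) (v x w : T.V → ℝ) : Prop :=
  (∀ l, T.IsLeaf l → w l = v l) ∧
  ∀ s, ¬ T.IsLeaf s → w s = fmax (T.children s) fun t => x t * w t

/-- `wexcl T x w s t`: the maximum value reaching `s` from its children other
than `t` (`0` when `t` is the only child). -/
noncomputable def wexcl (T : BTree) (x w : T.V → ℝ) (s t : T.V) : ℝ :=
  fmax ((T.children s).erase t) fun t' => x t' * w t'

/-- A fixed point of the tree bargaining equations: `x` is a share vector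
(`x root = 0`, `x t ∈ [0,1]` off the root), `w` is the induced value function,
and for every non-root `t` with parent `s`:
`(1 − x t)·w t = (1 − x s)·(max(w_{s∖t}, x t · w t) − w_{s∖t})`. -/
def IsTreeFixedPoint (T : BTree) (v x w : T.V → ℝ) : Prop :=
  IsValueFn T v x w ∧
  x T.root = 0 ∧
  (∀ t, t ≠ T.root → 0 ≤ x t ∧ x t ≤ 1) ∧
  ∀ t, t ≠ T.root →
    (1 - x t) * w t =
      (1 - x (T.parent t)) *
        (max (wexcl T x w (T.parent t) t) (x t * w t) - wexcl T x w (T.parent t) t)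

/-- The value `V(S)` of a coalition `S` of nodes: the maximum value of a leaf
whose entire path to the root lies in `S` (and `0` if there is no such leaf). -/
noncomputable def coalV (T : BTree) (v : T.V → ℝ) (S : Finset T.V) : ℝ :=
  sSup (insert 0
    {c : ℝ | ∃ l, T.IsLeaf l ∧ (∀ k : ℕ, T.parent^[k] l ∈ S) ∧ c = v l})

/-! Let `M t` be the largest leaf value below `t`. At a fixed point, a child `t` of `s` with
`x t * w t ≠ M t` has positive payoff, hence is the strict winner at `s`; so at most one child
of `s` has such a gap, and it passes the gap up:
`∑_{t child of s} (M t - x t * w t) = M s - w s`.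
Summing over all `s` telescopes to `∑ u = M root = v*`. For a coalition, `w t = u t + x t * w t`
and `x t * w t ≤ w (parent t)` bound `v l` by the payoffs along the path from `l` to the root. -/

open Finset

section Fmax

variable {α : Type*}

lemma zero_le_fmax (F : Finset α) (f : α → ℝ) : 0 ≤ fmax F f :=
  le_csSup ((F.finite_toSet.image f).insert 0).bddAbove (Set.mem_insert 0 _)

lemma le_fmax {F : Finset α} (f : α → ℝ) {t : α} (ht : t ∈ F) : f t ≤ fmax F f :=
  le_csSup ((F.finite_toSet.image f).insert 0).bddAbove
    (Set.mem_insert_of_mem 0 (Set.mem_image_of_mem f ht))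

lemma fmax_le {F : Finset α} {f : α → ℝ} {b : ℝ} (hb : 0 ≤ b)
    (h : ∀ t ∈ F, f t ≤ b) : fmax F f ≤ b :=
  csSup_le (Set.insert_nonempty _ _) <| by
    rintro _ (rfl | ⟨t, ht, rfl⟩)
    exacts [hb, h t ht]

lemma fmax_congr {F : Finset α} {f g : α → ℝ} (h : ∀ t ∈ F, f t = g t) :
    fmax F f = fmax F g := by
  rw [fmax, fmax, Set.image_congr h]

lemma fmax_attach (F : Finset α) (f : α → ℝ) :
    fmax F.attach (fun t => f t) = fmax F f :=
  le_antisymm (fmax_le (zero_le_fmax F f) fun t _ => le_fmax f t.2)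
    (fmax_le (zero_le_fmax _ _) fun t ht => le_fmax (fun t : F => f t) (mem_attach F ⟨t, ht⟩))

lemma fmax_eq_max_fmax_erase [DecidableEq α] {F : Finset α} (f : α → ℝ) {t : α}
    (ht : t ∈ F) : fmax F f = max (f t) (fmax (F.erase t) f) := by
  refine le_antisymm (fmax_le ((zero_le_fmax _ f).trans (le_max_right _ _)) fun t' ht' => ?_)
    (max_le (le_fmax f ht) (fmax_le (zero_le_fmax _ _) fun t' ht' =>
      le_fmax f (mem_of_mem_erase ht')))
  rcases eq_or_ne t' t with rfl | hne
  · exact le_max_left _ _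
  · exact (le_fmax f (mem_erase.2 ⟨hne, ht'⟩)).trans (le_max_right _ _)

end Fmax

namespace BTree

variable (T : BTree)

instance decidableIsLeaf : DecidablePred T.IsLeaf :=
  fun l => inferInstanceAs (Decidable (T.children l = ∅))

variable {T}

lemma mem_children {t s : T.V} : t ∈ T.children s ↔ t ≠ T.root ∧ T.parent t = s := by
  simp [children]

lemma mem_children_parent {t : T.V} (h : t ≠ T.root) : t ∈ T.children (T.parent t) :=
  mem_children.2 ⟨h, rfl⟩

lemma not_isLeaf_of_mem_children {t s : T.V} (h : t ∈ T.children s) : ¬ T.IsLeaf s := by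
  rw [IsLeaf]
  exact ne_empty_of_mem h

variable (T)

noncomputable def depth (t : T.V) : ℕ := Nat.find (T.reaches_root t)

variable {T}

lemma depth_eq_zero_iff {t : T.V} : T.depth t = 0 ↔ t = T.root := by
  simp [depth, Nat.find_eq_zero]

lemma depth_eq_depth_parent_add_one {t : T.V} (h : t ≠ T.root) :
    T.depth t = T.depth (T.parent t) + 1 := by
  rw [depth, Nat.find_eq_iff]
  refine ⟨Nat.find_spec (T.reaches_root (T.parent t)), fun n hn => ?_⟩
  rcases n with _ | n
  · exact h
  · exact Nat.find_min (T.reaches_root (T.parent t)) (Nat.lt_of_succ_lt_succ hn)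

lemma depth_of_mem_children {t s : T.V} (h : t ∈ T.children s) : T.depth t = T.depth s + 1 := by
  obtain ⟨hne, rfl⟩ := mem_children.1 h
  exact depth_eq_depth_parent_add_one hne

lemma depth_parent_le (t : T.V) : T.depth (T.parent t) ≤ T.depth t := by
  rcases eq_or_ne t T.root with rfl | h
  · rw [T.parent_root]
  · rw [depth_eq_depth_parent_add_one h]
    omega

lemma depth_iterate_parent_le (k : ℕ) (t : T.V) : T.depth (T.parent^[k] t) ≤ T.depth t := by
  induction k generalizing t with
  | zero => rfl
  | succ k ih => exact (ih _).trans (depth_parent_le t)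

lemma iterate_parent_succ_ne {t : T.V} (h : t ≠ T.root) (k : ℕ) : T.parent^[k + 1] t ≠ t := by
  intro hk
  have := depth_iterate_parent_le k (T.parent t)
  rw [← Function.iterate_succ_apply, hk, depth_eq_depth_parent_add_one h] at this
  omega

lemma sup_depth_sub_depth_lt {t s : T.V} (h : t ∈ T.children s) :
    univ.sup T.depth - T.depth t < univ.sup T.depth - T.depth s := by
  have := depth_of_mem_children h
  have := le_sup (f := T.depth) (mem_univ t)
  omega

theorem induction_from_leaves {P : T.V → Prop}
    (step : ∀ s, (∀ t ∈ T.children s, P t) → P s) (s : T.V) : P s :=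
  (measure fun t => univ.sup T.depth - T.depth t).wf.induction s fun s ih =>
    step s fun _ ht => ih _ (sup_depth_sub_depth_lt ht)

theorem induction_from_root {P : T.V → Prop} (base : P T.root)
    (step : ∀ t, t ≠ T.root → P (T.parent t) → P t) (t : T.V) : P t := by
  induction hd : T.depth t generalizing t with
  | zero => rwa [depth_eq_zero_iff.1 hd]
  | succ n ih =>
    have ht : t ≠ T.root := fun h => by simp [depth_eq_zero_iff.2 h] at hd
    rw [depth_eq_depth_parent_add_one ht] at hd
    exact step t ht (ih _ (Nat.add_right_cancel hd))

lemma sum_sum_children {β : Type*} [AddCommMonoid β] (g : T.V → β) :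
    ∑ s, ∑ t ∈ T.children s, g t = ∑ t ∈ univ.erase T.root, g t := by
  rw [← sum_fiberwise_of_maps_to (fun t _ => mem_univ (T.parent t)) g]
  refine sum_congr rfl fun s _ => sum_congr ?_ fun _ _ => rfl
  ext t
  simp [children, and_comm]

variable (T)

noncomputable def subtreeMax (v : T.V → ℝ) (t : T.V) : ℝ :=
  if T.IsLeaf t then v t
  else fmax (T.children t).attach fun c => subtreeMax v c
termination_by univ.sup T.depth - T.depth t
decreasing_by exact sup_depth_sub_depth_lt c.2

variable {T} {v : T.V → ℝ}

lemma subtreeMax_of_isLeaf {t : T.V} (h : T.IsLeaf t) : T.subtreeMax v t = v t := by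
  rw [subtreeMax, if_pos h]

lemma subtreeMax_of_not_isLeaf {t : T.V} (h : ¬ T.IsLeaf t) :
    T.subtreeMax v t = fmax (T.children t) (T.subtreeMax v) := by
  rw [subtreeMax, if_neg h, fmax_attach]

lemma subtreeMax_le {b : ℝ} (hb : 0 ≤ b) (hv : ∀ l, T.IsLeaf l → v l ≤ b) (t : T.V) :
    T.subtreeMax v t ≤ b := by
  induction t using T.induction_from_leaves with
  | step s ih =>
    by_cases hs : T.IsLeaf s
    · rw [subtreeMax_of_isLeaf hs]
      exact hv s hs
    · rw [subtreeMax_of_not_isLeaf hs]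
      exact fmax_le hb ih

lemma subtreeMax_le_subtreeMax_parent (t : T.V) :
    T.subtreeMax v t ≤ T.subtreeMax v (T.parent t) := by
  rcases eq_or_ne t T.root with rfl | h
  · rw [T.parent_root]
  · have hc := mem_children_parent h
    rw [subtreeMax_of_not_isLeaf (not_isLeaf_of_mem_children hc)]
    exact le_fmax _ hc

lemma le_subtreeMax_root {l : T.V} (hl : T.IsLeaf l) : v l ≤ T.subtreeMax v T.root := by
  have key : ∀ k, v l ≤ T.subtreeMax v (T.parent^[k] l) := fun k => by
    induction k with
    | zero => exact (subtreeMax_of_isLeaf hl).ge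
    | succ k ih =>
      rw [Function.iterate_succ_apply']
      exact ih.trans (subtreeMax_le_subtreeMax_parent _)
  obtain ⟨k, hk⟩ := T.reaches_root l
  exact hk ▸ key k

end BTree

lemma le_wexcl {T : BTree} (x w : T.V → ℝ) {s t t' : T.V} (ht' : t' ∈ T.children s)
    (hne : t' ≠ t) : x t' * w t' ≤ wexcl T x w s t :=
  le_fmax (fun t' => x t' * w t') (mem_erase.2 ⟨hne, ht'⟩)

namespace IsTreeFixedPoint

open BTree

variable {T : BTree} {v x w : T.V → ℝ} (hfp : IsTreeFixedPoint T v x w)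
include hfp

lemma w_of_isLeaf {l : T.V} (hl : T.IsLeaf l) : w l = v l :=
  hfp.1.1 l hl

lemma w_of_not_isLeaf {s : T.V} (hs : ¬ T.IsLeaf s) :
    w s = fmax (T.children s) fun t => x t * w t :=
  hfp.1.2 s hs

lemma x_root : x T.root = 0 :=
  hfp.2.1

lemma payoff_eq {t : T.V} (ht : t ≠ T.root) :
    (1 - x t) * w t = (1 - x (T.parent t)) *
      (max (wexcl T x w (T.parent t) t) (x t * w t) - wexcl T x w (T.parent t) t) :=
  hfp.2.2.2 t ht

lemma x_nonneg (t : T.V) : 0 ≤ x t := by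
  rcases eq_or_ne t T.root with rfl | h
  · exact hfp.x_root.ge
  · exact (hfp.2.2.1 t h).1

lemma x_le_one (t : T.V) : x t ≤ 1 := by
  rcases eq_or_ne t T.root with rfl | h
  · exact hfp.x_root.trans_le zero_le_one
  · exact (hfp.2.2.1 t h).2

lemma w_eq_max_wexcl {t s : T.V} (ht : t ∈ T.children s) :
    w s = max (wexcl T x w s t) (x t * w t) := by
  rw [hfp.w_of_not_isLeaf (not_isLeaf_of_mem_children ht), fmax_eq_max_fmax_erase _ ht, max_comm]
  rfl

lemma x_mul_w_le_w {t s : T.V} (ht : t ∈ T.children s) : x t * w t ≤ w s :=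
  hfp.w_eq_max_wexcl ht ▸ le_max_right _ _

lemma payoff_le_w {t s : T.V} (ht : t ∈ T.children s) : (1 - x t) * w t ≤ w s := by
  obtain ⟨hr, rfl⟩ := mem_children.1 ht
  have hwexcl : wexcl T x w (T.parent t) t ≤ w (T.parent t) :=
    hfp.w_eq_max_wexcl ht ▸ le_max_left _ _
  have hx₀ := hfp.x_nonneg (T.parent t)
  rw [hfp.payoff_eq hr, ← hfp.w_eq_max_wexcl ht]
  calc (1 - x (T.parent t)) * (w (T.parent t) - wexcl T x w (T.parent t) t)
      ≤ w (T.parent t) - wexcl T x w (T.parent t) t :=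
        mul_le_of_le_one_left (sub_nonneg.2 hwexcl) (by linarith)
    _ ≤ w (T.parent t) := sub_le_self _ (zero_le_fmax _ _)

variable (hv : ∀ l, T.IsLeaf l → 0 < v l)
include hv

lemma w_pos (t : T.V) : 0 < w t := by
  induction t using T.induction_from_leaves with
  | step s ih =>
    by_cases hs : T.IsLeaf s
    · exact hfp.w_of_isLeaf hs ▸ hv s hs
    · -- `w t = (1 - x t) * w t + x t * w t ≤ 2 * w s` for any child `t`
      obtain ⟨t, ht⟩ := nonempty_iff_ne_empty.2 hs
      linarith [ih t ht, hfp.payoff_le_w ht, hfp.x_mul_w_le_w ht]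

lemma payoff_nonneg (t : T.V) : 0 ≤ (1 - x t) * w t :=
  mul_nonneg (sub_nonneg.2 (hfp.x_le_one t)) (hfp.w_pos hv t).le

lemma w_le_subtreeMax (t : T.V) : w t ≤ T.subtreeMax v t := by
  induction t using T.induction_from_leaves with
  | step s ih =>
    by_cases hs : T.IsLeaf s
    · rw [hfp.w_of_isLeaf hs, subtreeMax_of_isLeaf hs]
    · rw [hfp.w_of_not_isLeaf hs, subtreeMax_of_not_isLeaf hs]
      refine fmax_le (zero_le_fmax _ _) fun t ht => ?_
      calc x t * w t ≤ w t := mul_le_of_le_one_left (hfp.w_pos hv t).le (hfp.x_le_one t)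
        _ ≤ T.subtreeMax v t := ih t ht
        _ ≤ fmax (T.children s) (T.subtreeMax v) := le_fmax _ ht

lemma subtreeMax_eq_of_payoff_eq_zero (t : T.V) (hu : (1 - x t) * w t = 0) :
    T.subtreeMax v t = x t * w t := by
  induction t using T.induction_from_leaves with
  | step s ih =>
    have hxs : x s = 1 := by
      linarith [(mul_eq_zero.1 hu).resolve_right (hfp.w_pos hv s).ne']
    rw [hxs, one_mul]
    by_cases hs : T.IsLeaf s
    · rw [subtreeMax_of_isLeaf hs, hfp.w_of_isLeaf hs]
    · rw [subtreeMax_of_not_isLeaf hs, hfp.w_of_not_isLeaf hs]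
      refine fmax_congr fun t ht => ih t ht ?_
      obtain ⟨hr, rfl⟩ := mem_children.1 ht
      simpa [hxs] using hfp.payoff_eq hr

lemma wexcl_lt_of_subtreeMax_ne {t s : T.V} (ht : t ∈ T.children s)
    (hgap : T.subtreeMax v t ≠ x t * w t) : wexcl T x w s t < x t * w t := by
  obtain ⟨hr, rfl⟩ := mem_children.1 ht
  have hpos : 0 < (1 - x t) * w t := (hfp.payoff_nonneg hv t).lt_of_ne fun h =>
    hgap (hfp.subtreeMax_eq_of_payoff_eq_zero hv t h.symm)
  by_contra hle
  have hfix := hfp.payoff_eq hr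
  rw [max_eq_left (not_lt.1 hle), sub_self, mul_zero] at hfix
  linarith

lemma subtreeMax_eq_of_sibling_ne {t t' s : T.V} (ht : t ∈ T.children s)
    (ht' : t' ∈ T.children s) (hne : t' ≠ t) (hgap : T.subtreeMax v t ≠ x t * w t) :
    T.subtreeMax v t' = x t' * w t' := by
  by_contra hgap'
  have h₁ := hfp.wexcl_lt_of_subtreeMax_ne hv ht hgap
  have h₂ := hfp.wexcl_lt_of_subtreeMax_ne hv ht' hgap'
  linarith [le_wexcl x w ht' hne, le_wexcl x w ht hne.symm]

lemma sum_children_subtreeMax_sub (s : T.V) :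
    ∑ t ∈ T.children s, (T.subtreeMax v t - x t * w t) = T.subtreeMax v s - w s := by
  by_cases hs : T.IsLeaf s
  · rw [hs, sum_empty, subtreeMax_of_isLeaf hs, hfp.w_of_isLeaf hs, sub_self]
  by_cases hall : ∀ t ∈ T.children s, T.subtreeMax v t = x t * w t
  · rw [sum_eq_zero fun t ht => by rw [hall t ht, sub_self], subtreeMax_of_not_isLeaf hs,
      hfp.w_of_not_isLeaf hs, fmax_congr hall, sub_self]
  obtain ⟨t, ht, hgap⟩ := not_forall₂.1 hall
  have hothers : ∀ t' ∈ (T.children s).erase t, T.subtreeMax v t' = x t' * w t' :=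
    fun t' ht' => hfp.subtreeMax_eq_of_sibling_ne hv ht (mem_of_mem_erase ht')
      (ne_of_mem_erase ht') hgap
  have hlt := hfp.wexcl_lt_of_subtreeMax_ne hv ht hgap
  have hws : w s = x t * w t := by rw [hfp.w_eq_max_wexcl ht, max_eq_right hlt.le]
  have hMs : T.subtreeMax v s = T.subtreeMax v t := by
    rw [subtreeMax_of_not_isLeaf hs, fmax_eq_max_fmax_erase _ ht, fmax_congr hothers, max_eq_left]
    calc wexcl T x w s t ≤ x t * w t := hlt.le
      _ ≤ w t := mul_le_of_le_one_left (hfp.w_pos hv t).le (hfp.x_le_one t)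
      _ ≤ T.subtreeMax v t := hfp.w_le_subtreeMax hv t
  rw [sum_eq_single_of_mem t ht fun t' ht' hne => by
    rw [hothers t' (mem_erase.2 ⟨hne, ht'⟩), sub_self], hMs, hws]

lemma sum_payoff_eq_subtreeMax_root :
    ∑ t, (1 - x t) * w t = T.subtreeMax v T.root := by
  have htel : ∑ s, (T.subtreeMax v s - w s) =
      ∑ t, (T.subtreeMax v t - x t * w t) - T.subtreeMax v T.root := by
    simp_rw [← hfp.sum_children_subtreeMax_sub hv, sum_sum_children,
      sum_erase_eq_sub (mem_univ T.root), hfp.x_root, zero_mul, sub_zero]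
  calc ∑ t, (1 - x t) * w t
      = ∑ t, (T.subtreeMax v t - x t * w t) - ∑ s, (T.subtreeMax v s - w s) := by
        rw [← sum_sub_distrib]
        exact sum_congr rfl fun t _ => by ring
    _ = T.subtreeMax v T.root := by rw [htel]; ring

lemma w_le_sum_payoff (t : T.V) (S : Finset T.V) (hS : ∀ k, T.parent^[k] t ∈ S) :
    w t ≤ ∑ a ∈ S, (1 - x a) * w a := by
  induction t using T.induction_from_root generalizing S with
  | base =>
    calc w T.root = (1 - x T.root) * w T.root := by rw [hfp.x_root, sub_zero, one_mul]
      _ ≤ ∑ a ∈ S, (1 - x a) * w a := single_le_sum (fun a _ => hfp.payoff_nonneg hv a) (hS 0)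
  | step t ht ih =>
    have htS : t ∈ S := hS 0
    have hpath : ∀ k, T.parent^[k] (T.parent t) ∈ S.erase t :=
      fun k => mem_erase.2 ⟨iterate_parent_succ_ne ht k, hS (k + 1)⟩
    calc w t = (1 - x t) * w t + x t * w t := by ring
      _ ≤ (1 - x t) * w t + ∑ a ∈ S.erase t, (1 - x a) * w a :=
        add_le_add_right ((hfp.x_mul_w_le_w (mem_children_parent ht)).trans (ih _ hpath)) _
      _ = ∑ a ∈ S, (1 - x a) * w a := add_sum_erase S (fun a => (1 - x a) * w a) htS

end IsTreeFixedPoint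

lemma coalV_le {T : BTree} {v : T.V → ℝ} {S : Finset T.V} {b : ℝ} (hb : 0 ≤ b)
    (h : ∀ l, T.IsLeaf l → (∀ k, T.parent^[k] l ∈ S) → v l ≤ b) : coalV T v S ≤ b :=
  csSup_le (Set.insert_nonempty _ _) <| by
    rintro _ (rfl | ⟨l, hl, hS, rfl⟩)
    exacts [hb, h l hl hS]

lemma le_coalV {T : BTree} {v : T.V → ℝ} {S : Finset T.V} {l : T.V} (hl : T.IsLeaf l)
    (hS : ∀ k, T.parent^[k] l ∈ S) : v l ≤ coalV T v S :=
  le_csSup (bddAbove_insert.2 <| (Set.finite_range v).bddAbove.mono <| by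
      rintro _ ⟨l, -, -, rfl⟩
      exact ⟨l, rfl⟩)
    (Set.mem_insert_of_mem _ ⟨l, hl, hS, rfl⟩)

theorem tree_fixed_point_in_core_general (T : BTree) (v x w : T.V → ℝ)
    (hv : ∀ l, T.IsLeaf l → 0 < v l)
    (hfp : IsTreeFixedPoint T v x w)
    (vstar : ℝ) (hmax : ∀ l, T.IsLeaf l → v l ≤ vstar)
    (hex : ∃ l, T.IsLeaf l ∧ v l = vstar) :
    (∑ t, (1 - x t) * w t = vstar) ∧
    coalV T v Finset.univ = vstar ∧
    (∀ S : Finset T.V, coalV T v S ≤ ∑ t ∈ S, (1 - x t) * w t) := by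
  obtain ⟨l₀, hl₀, rfl⟩ := hex
  have hv₀ : 0 ≤ v l₀ := (hv l₀ hl₀).le
  have hroot : T.subtreeMax v T.root = v l₀ :=
    le_antisymm (T.subtreeMax_le hv₀ hmax _) (T.le_subtreeMax_root hl₀)
  refine ⟨by rw [hfp.sum_payoff_eq_subtreeMax_root hv, hroot],
    le_antisymm (coalV_le hv₀ fun l hl _ => hmax l hl) (le_coalV hl₀ fun _ => mem_univ _),
    fun S => coalV_le (sum_nonneg fun a _ => hfp.payoff_nonneg hv a) fun l hl hS => ?_⟩
  exact hfp.w_of_isLeaf hl ▸ hfp.w_le_sum_payoff hv l S hS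

/-- Core membership of the fixed-point payoffs `u t = (1 − x t)·w t`: the total
payoff equals the grand coalition value `V(T) = v*`, and every coalition `S`
receives at least `V(S)`. -/
theorem tree_fixed_point_in_core (T : BTree) (v x w : T.V → ℝ)
    (hv : ∀ l, T.IsLeaf l → 0 < v l) (hroot : ¬ T.IsLeaf T.root)
    (hfp : IsTreeFixedPoint T v x w)
    (vstar : ℝ) (hmax : ∀ l, T.IsLeaf l → v l ≤ vstar)
    (hex : ∃ l, T.IsLeaf l ∧ v l = vstar) :
    (∑ t, (1 - x t) * w t = vstar) ∧
    coalV T v Finset.univ = vstar ∧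
    (∀ S : Finset T.V, coalV T v S ≤ ∑ t ∈ S, (1 - x t) * w t) :=
  tree_fixed_point_in_core_general T v x w hv hfp vstar hmax hex
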